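/- arXiv:2211.15904 — 2 statements merged into one kernel-verified Lean document; each statement's English description precedes it below -/
import Mathlib

section
/- For any nontrivial connected graph G with maximum degree Δ, χ_g(G) ≥ Δ + 1. -/
/-- A graceful `k`-coloring of `G`: a proper vertex coloring with colors in
`{1, ..., k}` whose induced edge coloring `f*(uv) = |f u - f v|` is a proper
edge coloring. -/
def IsGracefulColoring {V : Type*} (G : SimpleGraph V) (k : ℕ) (f : V → ℕ) : Prop :=
  (∀ v, 1 ≤ f v ∧ f v ≤ k) ∧
  (∀ ⦃u v⦄, G.Adj u v → f u ≠ f v) ∧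
  (∀ ⦃u v w⦄, G.Adj u v → G.Adj u w → v ≠ w →
    ((f u : ℤ) - f v).natAbs ≠ ((f u : ℤ) - f w).natAbs)

/-- The graceful chromatic number: the least `k` admitting a graceful `k`-coloring. -/
noncomputable def gracefulChromaticNumber {V : Type*} (G : SimpleGraph V) : ℕ :=
  sInf {k | ∃ f : V → ℕ, IsGracefulColoring G k f}

lemma two_pow_no_ap {a b c : ℕ} (h : 2 ^ b + 2 ^ c = 2 ^ (a + 1)) : b = c := by
  by_contra hne
  wlog hbc : b < c generalizing b c
  · exact this (by omega) (Ne.symm hne) (by omega)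
  have hb : (2:ℕ) ^ b < 2 ^ c := Nat.pow_lt_pow_right one_lt_two hbc
  have hb0 : 0 < (2:ℕ) ^ b := Nat.pow_pos (by norm_num)
  have hcc : (2:ℕ) ^ (c + 1) = 2 * 2 ^ c := by ring
  have h1 : (2:ℕ) ^ c < 2 ^ (a + 1) := by omega
  have h2 : (2:ℕ) ^ (a + 1) < 2 ^ (c + 1) := by omega
  have := (Nat.pow_lt_pow_iff_right (a := 2) one_lt_two).mp h1
  have := (Nat.pow_lt_pow_iff_right (a := 2) one_lt_two).mp h2
  omega

lemma exists_graceful {V : Type*} [Fintype V] (G : SimpleGraph V) :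
    ∃ k f, IsGracefulColoring G k f := by
  classical
  let e := Fintype.equivFin V
  refine ⟨2 ^ Fintype.card V, fun v => 2 ^ (e v : ℕ), ?_, ?_, ?_⟩
  · intro v
    exact ⟨Nat.one_le_two_pow, Nat.pow_le_pow_right (by norm_num) (e v).isLt.le⟩
  · intro u v huv
    have h1 : e u ≠ e v := fun h => G.ne_of_adj huv (e.injective h)
    have h2 : (e u : ℕ) ≠ (e v : ℕ) := fun h => h1 (Fin.ext h)
    exact fun h => h2 (Nat.pow_right_injective (by norm_num) h)
  · intro u v w huv huw hvw heq
    have hbc : (e v : ℕ) ≠ (e w : ℕ) := fun h => hvw (e.injective (Fin.ext h))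
    rcases Int.natAbs_eq_natAbs_iff.mp heq with h | h <;> push_cast at h
    · have : (2:ℤ) ^ (e v : ℕ) = 2 ^ (e w : ℕ) := by linarith
      have : (2:ℕ) ^ (e v : ℕ) = 2 ^ (e w : ℕ) := by exact_mod_cast this
      exact hbc (Nat.pow_right_injective (by norm_num) this)
    · have hz : (2:ℤ) ^ (e v : ℕ) + 2 ^ (e w : ℕ) = 2 ^ ((e u : ℕ) + 1) := by
        rw [pow_succ]; linarith
      have hn : (2:ℕ) ^ (e v : ℕ) + 2 ^ (e w : ℕ) = 2 ^ ((e u : ℕ) + 1) := by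
        exact_mod_cast hz
      exact hbc (two_pow_no_ap hn)

theorem gracefulChromaticNumber_ge_maxDegree_succ {V : Type*} [Fintype V] [Nontrivial V]
    (G : SimpleGraph V) [DecidableRel G.Adj] (hc : G.Connected) :
    G.maxDegree + 1 ≤ gracefulChromaticNumber G := by
  classical
  obtain ⟨k0, f0, hf0⟩ := exists_graceful G
  refine le_csInf ⟨k0, f0, hf0⟩ ?_
  rintro k ⟨f, hrange, hproper, hedge⟩
  obtain ⟨v, hv⟩ := G.exists_maximal_degree_vertex
  have hcard : G.degree v ≤ k - 1 := by
    rw [← SimpleGraph.card_neighborFinset_eq_degree]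
    have hicc : (Finset.Icc 1 (k - 1)).card = k - 1 := by
      rw [Nat.card_Icc]; omega
    rw [← hicc]
    apply Finset.card_le_card_of_injOn (fun w => ((f v : ℤ) - f w).natAbs)
    · intro w hw
      rw [Finset.mem_coe, SimpleGraph.mem_neighborFinset] at hw
      have h1 := hrange v
      have h2 := hrange w
      have h3 := hproper hw
      simp only [Finset.mem_coe, Finset.mem_Icc]
      omega
    · intro a ha b hb hab
      simp only [Finset.mem_coe, SimpleGraph.mem_neighborFinset] at ha hb
      by_contra hne
      exact hedge ha hb hne hab
  have hk : 1 ≤ k := (hrange v).1.trans (hrange v).2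
  omega
end

section
/- For n ≥ 4 with n ≢ 0 (mod 4), the graceful chromatic number of the circular ladder CL_n = C_n □ P_2 equals 6. -/
/-- The circular ladder `CL_n = C_n □ P_2`: the closed ladder together with the
wrap-around edges `x_1 x_n` and `y_1 y_n`. -/
def circularLadder (n : ℕ) : SimpleGraph (Fin 2 × Fin n) :=
  SimpleGraph.fromRel (fun a b =>
    (a.1 = b.1 ∧ (a.2.val + 1) % n = b.2.val) ∨ (a.2 = b.2 ∧ a.1 ≠ b.1))


open Fin.CommRing

lemma fin2_ne {x y : Fin 2} (h : x ≠ y) : y = x + 1 := by revert x y; decide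

lemma fin2_add_one_ne (x : Fin 2) : x + 1 ≠ x := by revert x; decide

section
variable {n : ℕ} [NeZero n]

lemma val_one_of (hn : 3 ≤ n) : (1 : Fin n).val = 1 := by
  rw [Fin.val_one']; exact Nat.mod_eq_of_lt (by omega)

lemma val_add_one (hn : 3 ≤ n) (i : Fin n) : (i + 1).val = (i.val + 1) % n := by
  rw [Fin.val_add, val_one_of hn]

lemma add_one_ne (hn : 3 ≤ n) (i : Fin n) : i + 1 ≠ i := by
  intro h
  have h2 := congrArg Fin.val h
  rw [val_add_one hn] at h2
  have hi := i.isLt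
  rcases Nat.lt_or_ge (i.val + 1) n with h' | h'
  · rw [Nat.mod_eq_of_lt h'] at h2; omega
  · have h3 : i.val + 1 = n := by omega
    rw [h3, Nat.mod_self] at h2; omega

lemma myTwo_ne_zero (hn : 3 ≤ n) : (2 : Fin n) ≠ 0 := by
  have h : ((2 : ℕ) : Fin n) = (2 : Fin n) := by push_cast; ring
  intro h0
  rw [← h] at h0
  have h2 := congrArg Fin.val h0
  rw [Fin.val_natCast] at h2
  simp [Nat.mod_eq_of_lt (show 2 < n by omega)] at h2

lemma adj_iff (hn : 3 ≤ n) (u v : Fin 2 × Fin n) :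
    (circularLadder n).Adj u v ↔
      v = (u.1, u.2 + 1) ∨ v = (u.1, u.2 - 1) ∨ v = (u.1 + 1, u.2) := by
  constructor
  · rintro ⟨hne, h | h⟩
    · rcases h with ⟨h1, h2⟩ | ⟨h1, h2⟩
      · exact Or.inl (Prod.ext_iff.mpr ⟨h1.symm, Fin.ext (by rw [val_add_one hn, h2])⟩)
      · exact Or.inr (Or.inr (Prod.ext_iff.mpr ⟨fin2_ne h2, h1.symm⟩))
    · rcases h with ⟨h1, h2⟩ | ⟨h1, h2⟩
      · refine Or.inr (Or.inl (Prod.ext_iff.mpr ⟨h1, ?_⟩))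
        have h3 : u.2 = v.2 + 1 := Fin.ext (by rw [val_add_one hn, h2])
        rw [h3]; ring
      · exact Or.inr (Or.inr (Prod.ext_iff.mpr ⟨fin2_ne (Ne.symm h2), h1⟩))
  · intro h
    rcases h with h | h | h <;> subst h
    · refine ⟨fun h => add_one_ne hn u.2 ?_, Or.inl (Or.inl ⟨rfl, (val_add_one hn u.2).symm⟩)⟩
      exact (congrArg Prod.snd h).symm
    · refine ⟨fun h => add_one_ne hn (u.2 - 1) ?_, Or.inr (Or.inl ⟨rfl, ?_⟩)⟩
      · rw [sub_add_cancel]; exact congrArg Prod.snd h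
      · rw [← val_add_one hn (u.2 - 1), sub_add_cancel]
    · refine ⟨fun h => fin2_add_one_ne u.1 (congrArg Prod.fst h).symm,
        Or.inl (Or.inr ⟨rfl, fun h => fin2_add_one_ne u.1 h.symm⟩)⟩
end

lemma val_sub_one {n : ℕ} [NeZero n] (hn : 3 ≤ n) (i : Fin n) : (i - 1).val = (n - 1 + i.val) % n := by
  rw [Fin.sub_def]
  simp only [val_one_of hn]

lemma modip {n i : ℕ} (h : i + 1 < n) : (i+1) % n = i+1 := Nat.mod_eq_of_lt h
lemma modip0 {n i : ℕ} (h : i + 1 = n) : (i+1) % n = 0 := by rw [h, Nat.mod_self]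
lemma modim {n i : ℕ} (h1 : 1 ≤ i) (h2 : i < n) : (n-1+i) % n = i - 1 := by
  have h3 : n - 1 + i = (i-1) + n := by omega
  rw [h3, Nat.add_mod_right, Nat.mod_eq_of_lt (by omega)]
lemma modim0 {n : ℕ} (h : 3 ≤ n) : (n-1+0) % n = n - 1 := by
  rw [Nat.add_zero, Nat.mod_eq_of_lt (by omega)]

def Vert (a b c d : ℕ) : Prop :=
  a ≠ b ∧ a ≠ c ∧ a ≠ d ∧
  ((a:ℤ) - b).natAbs ≠ ((a:ℤ) - c).natAbs ∧
  ((a:ℤ) - b).natAbs ≠ ((a:ℤ) - d).natAbs ∧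
  ((a:ℤ) - c).natAbs ≠ ((a:ℤ) - d).natAbs

instance (a b c d : ℕ) : Decidable (Vert a b c d) := by unfold Vert; infer_instance

section
variable {n : ℕ} [NeZero n]

lemma nbr_ne1 (hn : 3 ≤ n) (u : Fin 2 × Fin n) : (u.1, u.2 + 1) ≠ (u.1, u.2 - 1) := by
  intro h
  have h2 : u.2 + 1 = u.2 - 1 := congrArg Prod.snd h
  have h3 : (2 : Fin n) = 0 := by linear_combination h2
  exact myTwo_ne_zero hn h3

lemma nbr_ne2 (u : Fin 2 × Fin n) : (u.1, u.2 + 1) ≠ (u.1 + 1, u.2) := by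
  intro h
  exact fin2_add_one_ne u.1 (congrArg Prod.fst h).symm

lemma nbr_ne3 (u : Fin 2 × Fin n) : (u.1, u.2 - 1) ≠ (u.1 + 1, u.2) := by
  intro h
  exact fin2_add_one_ne u.1 (congrArg Prod.fst h).symm

lemma graceful_of_local (hn : 3 ≤ n) (f : Fin 2 × Fin n → ℕ)
    (hb : ∀ v, 1 ≤ f v ∧ f v ≤ 6)
    (h : ∀ u : Fin 2 × Fin n,
      Vert (f u) (f (u.1, u.2 + 1)) (f (u.1, u.2 - 1)) (f (u.1 + 1, u.2))) :
    IsGracefulColoring (circularLadder n) 6 f := by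
  refine ⟨hb, ?_, ?_⟩
  · intro u v hadj
    rcases (adj_iff hn u v).mp hadj with h' | h' | h' <;> subst h'
    · exact (h u).1
    · exact (h u).2.1
    · exact (h u).2.2.1
  · intro u v w h1 h2 hvw
    rcases (adj_iff hn u v).mp h1 with h' | h' | h' <;>
      rcases (adj_iff hn u w).mp h2 with h'' | h'' | h'' <;> subst h' <;> subst h''
    · exact absurd rfl hvw
    · exact (h u).2.2.2.1
    · exact (h u).2.2.2.2.1
    · exact Ne.symm (h u).2.2.2.1
    · exact absurd rfl hvw
    · exact (h u).2.2.2.2.2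
    · exact Ne.symm (h u).2.2.2.2.1
    · exact Ne.symm (h u).2.2.2.2.2
    · exact absurd rfl hvw

lemma colors_ne_three (hn : 3 ≤ n) (f : Fin 2 × Fin n → ℕ)
    (hf : IsGracefulColoring (circularLadder n) 5 f) : ∀ u, f u ≠ 3 := by
  obtain ⟨hb, hp, hd⟩ := hf
  intro u
  have a1 : (circularLadder n).Adj u (u.1, u.2 + 1) := (adj_iff hn u _).mpr (Or.inl rfl)
  have a2 : (circularLadder n).Adj u (u.1, u.2 - 1) := (adj_iff hn u _).mpr (Or.inr (Or.inl rfl))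
  have a3 : (circularLadder n).Adj u (u.1 + 1, u.2) := (adj_iff hn u _).mpr (Or.inr (Or.inr rfl))
  have hb0 := hb u
  have hb1 := hb (u.1, u.2 + 1)
  have hb2 := hb (u.1, u.2 - 1)
  have hb3 := hb (u.1 + 1, u.2)
  have n1 := hp a1
  have n2 := hp a2
  have n3 := hp a3
  have d1 := hd a1 a2 (nbr_ne1 hn u)
  have d2 := hd a1 a3 (nbr_ne2 u)
  have d3 := hd a2 a3 (nbr_ne3 u)
  omega

lemma sum_twelve (hn : 3 ≤ n) (f : Fin 2 × Fin n → ℕ)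
    (hf : IsGracefulColoring (circularLadder n) 5 f) (u : Fin 2 × Fin n) :
    f u + f (u.1, u.2 + 1) + f (u.1, u.2 - 1) + f (u.1 + 1, u.2) = 12 := by
  have h3 := colors_ne_three hn f hf
  obtain ⟨hb, hp, hd⟩ := hf
  have a1 : (circularLadder n).Adj u (u.1, u.2 + 1) := (adj_iff hn u _).mpr (Or.inl rfl)
  have a2 : (circularLadder n).Adj u (u.1, u.2 - 1) := (adj_iff hn u _).mpr (Or.inr (Or.inl rfl))
  have a3 : (circularLadder n).Adj u (u.1 + 1, u.2) := (adj_iff hn u _).mpr (Or.inr (Or.inr rfl))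
  have hb0 := hb u
  have hb1 := hb (u.1, u.2 + 1)
  have hb2 := hb (u.1, u.2 - 1)
  have hb3 := hb (u.1 + 1, u.2)
  have h30 := h3 u
  have h31 := h3 (u.1, u.2 + 1)
  have h32 := h3 (u.1, u.2 - 1)
  have h33 := h3 (u.1 + 1, u.2)
  have n1 := hp a1
  have n2 := hp a2
  have n3 := hp a3
  have d1 := hd a1 a2 (nbr_ne1 hn u)
  have d2 := hd a1 a3 (nbr_ne2 u)
  have d3 := hd a2 a3 (nbr_ne3 u)
  omega

end

lemma no_graceful_five {n : ℕ} (hn : 4 ≤ n) (hmod : n % 4 ≠ 0)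
    (f : Fin 2 × Fin n → ℕ) (hf : IsGracefulColoring (circularLadder n) 5 f) : False := by
  haveI : NeZero n := ⟨by omega⟩
  have hn3 : 3 ≤ n := by omega
  -- the signed rung difference
  set e : Fin n → ℤ := fun i => (f (0, i) : ℤ) - f (1, i) with he_def
  have henz : ∀ i, e i ≠ 0 := by
    intro i h
    have a3 : (circularLadder n).Adj (0, i) ((0:Fin 2) + 1, i) :=
      (adj_iff hn3 (0, i) _).mpr (Or.inr (Or.inr rfl))
    have h01 : ((0:Fin 2) + 1) = 1 := rfl
    rw [h01] at a3
    have := hf.2.1 a3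
    simp only [he_def] at h
    omega
  have he : ∀ i : Fin n, e (i + 1) = - e (i - 1) := by
    intro i
    have h0 := sum_twelve hn3 f hf (0, i)
    have h1 := sum_twelve hn3 f hf (1, i)
    have h01 : ((0:Fin 2) + 1) = 1 := rfl
    have h10 : ((1:Fin 2) + 1) = 0 := rfl
    simp only [h01] at h0
    simp only [h10] at h1
    simp only [he_def]
    omega
  set E : ℕ → ℤ := fun k => e ((k : ℕ) : Fin n) with hE_def
  have hE2 : ∀ k, E (k + 2) = - E k := by
    intro k
    have h := he ((k : Fin n) + 1)
    have e1 : (((k + 2 : ℕ)) : Fin n) = ((k : Fin n) + 1) + 1 := by push_cast; ring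
    have e2 : ((k : Fin n) + 1) - 1 = (k : Fin n) := by ring
    simp only [hE_def, e1, h, e2]
  have hper : ∀ k, E (k + n) = E k := by
    intro k
    have : ((k + n : ℕ) : Fin n) = (k : Fin n) := by push_cast; simp
    simp only [hE_def, this]
  have hpow : ∀ m k, E (k + 2 * m) = (-1) ^ m * E k := by
    intro m
    induction m with
    | zero => intro k; simp
    | succ m ih =>
      intro k
      have h1 : k + 2 * (m + 1) = (k + 2) + 2 * m := by ring
      rw [h1, ih (k + 2), hE2 k]
      ring
  have hE00 : E 0 ≠ 0 := henz _
  rcases (by omega : n % 2 = 1 ∨ (n % 2 = 0 ∧ (n / 2) % 2 = 1)) with hodd | ⟨heven, hhalf⟩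
  · have h1 : E (0 + 2 * n) = (-1) ^ n * E 0 := hpow n 0
    have h2 : E (0 + 2 * n) = E 0 := by
      have e1 : 0 + 2 * n = (0 + n) + n := by ring
      rw [e1, hper (0 + n), hper 0]
    rw [h2, (Nat.odd_iff.mpr hodd).neg_one_pow] at h1
    omega
  · have h1 : E (0 + 2 * (n / 2)) = (-1) ^ (n / 2) * E 0 := hpow (n / 2) 0
    have h2 : E (0 + 2 * (n / 2)) = E 0 := by
      have e1 : 0 + 2 * (n / 2) = 0 + n := by omega
      rw [e1, hper 0]
    rw [h2, (Nat.odd_iff.mpr hhalf).neg_one_pow] at h1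
    omega


def B (j m : ℕ) : ℕ :=
  if j = 0 then (if m = 0 then 1 else if m = 1 then 2 else if m = 2 then 4 else 5)
  else (if m = 0 then 4 else if m = 1 then 5 else if m = 2 then 1 else 2)

def T1 (j k m : ℕ) : ℕ :=
  if k = 1 then (if j = 0 then 5 else 2) else if k = 2 then (if j = 0 then 3 else 6) else B j m

def F1 (n j i : ℕ) : ℕ := T1 j (min (n - i) 3) (i % 4)

def T3 (j k m : ℕ) : ℕ :=
  if k = 1 then (if j = 0 then 5 else 2) else if k = 2 then (if j = 0 then 6 else 1)
  else if k = 3 then (if j = 0 then 3 else 4) else B j m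

def F3 (n j i : ℕ) : ℕ := T3 j (min (n - i) 4) (i % 4)

def T2 (j k m : ℕ) : ℕ :=
  if k = 1 then (if j = 0 then 5 else 2) else if k = 2 then (if j = 0 then 3 else 6)
  else if k = 3 then (if j = 0 then 4 else 1) else if k = 4 then (if j = 0 then 2 else 5)
  else if k = 5 then (if j = 0 then 6 else 3) else B j m

def F2 (n j i : ℕ) : ℕ := T2 j (min (n - i) 6) (i % 4)

lemma key1 (n i : ℕ) (hmod : n % 4 = 1) (hn : 5 ≤ n) (hi : i < n) :
    Vert (F1 n 0 i) (F1 n 0 ((i+1) % n)) (F1 n 0 ((n-1+i) % n)) (F1 n 1 i) ∧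
    Vert (F1 n 1 i) (F1 n 1 ((i+1) % n)) (F1 n 1 ((n-1+i) % n)) (F1 n 0 i) := by
  simp only [F1]
  rcases (by omega : i = 0 ∨ (1 ≤ i ∧ i + 4 ≤ n) ∨ i = n - 3 ∨ i = n - 2 ∨ i = n - 1) with rfl | ⟨h1i, h2i⟩ | rfl | rfl | rfl
  · rw [modip (show 0 + 1 < n by omega), modim0 (show 3 ≤ n by omega)]
    rw [show min (n - (0)) 3 = 3 by omega, show (0) % 4 = 0 by omega, show min (n - (0 + 1)) 3 = 3 by omega, show (0 + 1) % 4 = 1 by omega, show min (n - (n - 1)) 3 = 1 by omega, show (n - 1) % 4 = 0 by omega]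
    decide
  · rcases (by omega : i % 4 = 0 ∨ i % 4 = 1 ∨ i % 4 = 2 ∨ i % 4 = 3) with hm | hm | hm | hm
    · rw [modip (show i + 1 < n by omega), modim (show 1 ≤ i by omega) (show i < n by omega)]
      rw [show min (n - (i)) 3 = 3 by omega, show (i) % 4 = 0 by omega, show min (n - (i + 1)) 3 = 3 by omega, show (i + 1) % 4 = 1 by omega, show min (n - (i - 1)) 3 = 3 by omega, show (i - 1) % 4 = 3 by omega]
      decide
    · rw [modip (show i + 1 < n by omega), modim (show 1 ≤ i by omega) (show i < n by omega)]
      rw [show min (n - (i)) 3 = 3 by omega, show (i) % 4 = 1 by omega, show min (n - (i + 1)) 3 = 3 by omega, show (i + 1) % 4 = 2 by omega, show min (n - (i - 1)) 3 = 3 by omega, show (i - 1) % 4 = 0 by omega]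
      decide
    · rw [modip (show i + 1 < n by omega), modim (show 1 ≤ i by omega) (show i < n by omega)]
      rw [show min (n - (i)) 3 = 3 by omega, show (i) % 4 = 2 by omega, show min (n - (i + 1)) 3 = 3 by omega, show (i + 1) % 4 = 3 by omega, show min (n - (i - 1)) 3 = 3 by omega, show (i - 1) % 4 = 1 by omega]
      decide
    · rw [modip (show i + 1 < n by omega), modim (show 1 ≤ i by omega) (show i < n by omega)]
      rw [show min (n - (i)) 3 = 3 by omega, show (i) % 4 = 3 by omega, show min (n - (i + 1)) 3 = 3 by omega, show (i + 1) % 4 = 0 by omega, show min (n - (i - 1)) 3 = 3 by omega, show (i - 1) % 4 = 2 by omega]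
      decide
  · rw [modip (show n - 3 + 1 < n by omega), modim (show 1 ≤ n - 3 by omega) (show n - 3 < n by omega)]
    rw [show min (n - (n - 3)) 3 = 3 by omega, show (n - 3) % 4 = 2 by omega, show min (n - (n - 3 + 1)) 3 = 2 by omega, show (n - 3 + 1) % 4 = 3 by omega, show min (n - (n - 3 - 1)) 3 = 3 by omega, show (n - 3 - 1) % 4 = 1 by omega]
    decide
  · rw [modip (show n - 2 + 1 < n by omega), modim (show 1 ≤ n - 2 by omega) (show n - 2 < n by omega)]
    rw [show min (n - (n - 2)) 3 = 2 by omega, show (n - 2) % 4 = 3 by omega, show min (n - (n - 2 + 1)) 3 = 1 by omega, show (n - 2 + 1) % 4 = 0 by omega, show min (n - (n - 2 - 1)) 3 = 3 by omega, show (n - 2 - 1) % 4 = 2 by omega]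
    decide
  · rw [modip0 (show n - 1 + 1 = n by omega), modim (show 1 ≤ n - 1 by omega) (show n - 1 < n by omega)]
    rw [show min (n - (n - 1)) 3 = 1 by omega, show (n - 1) % 4 = 0 by omega, show min (n - (0)) 3 = 3 by omega, show (0) % 4 = 0 by omega, show min (n - (n - 1 - 1)) 3 = 2 by omega, show (n - 1 - 1) % 4 = 3 by omega]
    decide

lemma key3 (n i : ℕ) (hmod : n % 4 = 3) (hn : 7 ≤ n) (hi : i < n) :
    Vert (F3 n 0 i) (F3 n 0 ((i+1) % n)) (F3 n 0 ((n-1+i) % n)) (F3 n 1 i) ∧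
    Vert (F3 n 1 i) (F3 n 1 ((i+1) % n)) (F3 n 1 ((n-1+i) % n)) (F3 n 0 i) := by
  simp only [F3]
  rcases (by omega : i = 0 ∨ (1 ≤ i ∧ i + 5 ≤ n) ∨ i = n - 4 ∨ i = n - 3 ∨ i = n - 2 ∨ i = n - 1) with rfl | ⟨h1i, h2i⟩ | rfl | rfl | rfl | rfl
  · rw [modip (show 0 + 1 < n by omega), modim0 (show 3 ≤ n by omega)]
    rw [show min (n - (0)) 4 = 4 by omega, show (0) % 4 = 0 by omega, show min (n - (0 + 1)) 4 = 4 by omega, show (0 + 1) % 4 = 1 by omega, show min (n - (n - 1)) 4 = 1 by omega, show (n - 1) % 4 = 2 by omega]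
    decide
  · rcases (by omega : i % 4 = 0 ∨ i % 4 = 1 ∨ i % 4 = 2 ∨ i % 4 = 3) with hm | hm | hm | hm
    · rw [modip (show i + 1 < n by omega), modim (show 1 ≤ i by omega) (show i < n by omega)]
      rw [show min (n - (i)) 4 = 4 by omega, show (i) % 4 = 0 by omega, show min (n - (i + 1)) 4 = 4 by omega, show (i + 1) % 4 = 1 by omega, show min (n - (i - 1)) 4 = 4 by omega, show (i - 1) % 4 = 3 by omega]
      decide
    · rw [modip (show i + 1 < n by omega), modim (show 1 ≤ i by omega) (show i < n by omega)]
      rw [show min (n - (i)) 4 = 4 by omega, show (i) % 4 = 1 by omega, show min (n - (i + 1)) 4 = 4 by omega, show (i + 1) % 4 = 2 by omega, show min (n - (i - 1)) 4 = 4 by omega, show (i - 1) % 4 = 0 by omega]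
      decide
    · rw [modip (show i + 1 < n by omega), modim (show 1 ≤ i by omega) (show i < n by omega)]
      rw [show min (n - (i)) 4 = 4 by omega, show (i) % 4 = 2 by omega, show min (n - (i + 1)) 4 = 4 by omega, show (i + 1) % 4 = 3 by omega, show min (n - (i - 1)) 4 = 4 by omega, show (i - 1) % 4 = 1 by omega]
      decide
    · rw [modip (show i + 1 < n by omega), modim (show 1 ≤ i by omega) (show i < n by omega)]
      rw [show min (n - (i)) 4 = 4 by omega, show (i) % 4 = 3 by omega, show min (n - (i + 1)) 4 = 4 by omega, show (i + 1) % 4 = 0 by omega, show min (n - (i - 1)) 4 = 4 by omega, show (i - 1) % 4 = 2 by omega]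
      decide
  · rw [modip (show n - 4 + 1 < n by omega), modim (show 1 ≤ n - 4 by omega) (show n - 4 < n by omega)]
    rw [show min (n - (n - 4)) 4 = 4 by omega, show (n - 4) % 4 = 3 by omega, show min (n - (n - 4 + 1)) 4 = 3 by omega, show (n - 4 + 1) % 4 = 0 by omega, show min (n - (n - 4 - 1)) 4 = 4 by omega, show (n - 4 - 1) % 4 = 2 by omega]
    decide
  · rw [modip (show n - 3 + 1 < n by omega), modim (show 1 ≤ n - 3 by omega) (show n - 3 < n by omega)]
    rw [show min (n - (n - 3)) 4 = 3 by omega, show (n - 3) % 4 = 0 by omega, show min (n - (n - 3 + 1)) 4 = 2 by omega, show (n - 3 + 1) % 4 = 1 by omega, show min (n - (n - 3 - 1)) 4 = 4 by omega, show (n - 3 - 1) % 4 = 3 by omega]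
    decide
  · rw [modip (show n - 2 + 1 < n by omega), modim (show 1 ≤ n - 2 by omega) (show n - 2 < n by omega)]
    rw [show min (n - (n - 2)) 4 = 2 by omega, show (n - 2) % 4 = 1 by omega, show min (n - (n - 2 + 1)) 4 = 1 by omega, show (n - 2 + 1) % 4 = 2 by omega, show min (n - (n - 2 - 1)) 4 = 3 by omega, show (n - 2 - 1) % 4 = 0 by omega]
    decide
  · rw [modip0 (show n - 1 + 1 = n by omega), modim (show 1 ≤ n - 1 by omega) (show n - 1 < n by omega)]
    rw [show min (n - (n - 1)) 4 = 1 by omega, show (n - 1) % 4 = 2 by omega, show min (n - (0)) 4 = 4 by omega, show (0) % 4 = 0 by omega, show min (n - (n - 1 - 1)) 4 = 2 by omega, show (n - 1 - 1) % 4 = 1 by omega]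
    decide

lemma key2 (n i : ℕ) (hmod : n % 4 = 2) (hn : 6 ≤ n) (hi : i < n) :
    Vert (F2 n 0 i) (F2 n 0 ((i+1) % n)) (F2 n 0 ((n-1+i) % n)) (F2 n 1 i) ∧
    Vert (F2 n 1 i) (F2 n 1 ((i+1) % n)) (F2 n 1 ((n-1+i) % n)) (F2 n 0 i) := by
  simp only [F2]
  rcases (by omega : (i = 0 ∧ n = 6) ∨ (i = 0 ∧ 10 ≤ n) ∨ (1 ≤ i ∧ i + 7 ≤ n) ∨ (i = n - 6 ∧ 10 ≤ n) ∨ i = n - 5 ∨ i = n - 4 ∨ i = n - 3 ∨ i = n - 2 ∨ i = n - 1) with ⟨rfl, rfl⟩ | ⟨rfl, hn10⟩ | ⟨h1i, h2i⟩ | ⟨rfl, hn10⟩ | rfl | rfl | rfl | rfl | rfl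
  · decide
  · rw [modip (show 0 + 1 < n by omega), modim0 (show 3 ≤ n by omega)]
    rw [show min (n - (0)) 6 = 6 by omega, show (0) % 4 = 0 by omega, show min (n - (0 + 1)) 6 = 6 by omega, show (0 + 1) % 4 = 1 by omega, show min (n - (n - 1)) 6 = 1 by omega, show (n - 1) % 4 = 1 by omega]
    decide
  · rcases (by omega : i % 4 = 0 ∨ i % 4 = 1 ∨ i % 4 = 2 ∨ i % 4 = 3) with hm | hm | hm | hm
    · rw [modip (show i + 1 < n by omega), modim (show 1 ≤ i by omega) (show i < n by omega)]
      rw [show min (n - (i)) 6 = 6 by omega, show (i) % 4 = 0 by omega, show min (n - (i + 1)) 6 = 6 by omega, show (i + 1) % 4 = 1 by omega, show min (n - (i - 1)) 6 = 6 by omega, show (i - 1) % 4 = 3 by omega]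
      decide
    · rw [modip (show i + 1 < n by omega), modim (show 1 ≤ i by omega) (show i < n by omega)]
      rw [show min (n - (i)) 6 = 6 by omega, show (i) % 4 = 1 by omega, show min (n - (i + 1)) 6 = 6 by omega, show (i + 1) % 4 = 2 by omega, show min (n - (i - 1)) 6 = 6 by omega, show (i - 1) % 4 = 0 by omega]
      decide
    · rw [modip (show i + 1 < n by omega), modim (show 1 ≤ i by omega) (show i < n by omega)]
      rw [show min (n - (i)) 6 = 6 by omega, show (i) % 4 = 2 by omega, show min (n - (i + 1)) 6 = 6 by omega, show (i + 1) % 4 = 3 by omega, show min (n - (i - 1)) 6 = 6 by omega, show (i - 1) % 4 = 1 by omega]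
      decide
    · rw [modip (show i + 1 < n by omega), modim (show 1 ≤ i by omega) (show i < n by omega)]
      rw [show min (n - (i)) 6 = 6 by omega, show (i) % 4 = 3 by omega, show min (n - (i + 1)) 6 = 6 by omega, show (i + 1) % 4 = 0 by omega, show min (n - (i - 1)) 6 = 6 by omega, show (i - 1) % 4 = 2 by omega]
      decide
  · rw [modip (show n - 6 + 1 < n by omega), modim (show 1 ≤ n - 6 by omega) (show n - 6 < n by omega)]
    rw [show min (n - (n - 6)) 6 = 6 by omega, show (n - 6) % 4 = 0 by omega, show min (n - (n - 6 + 1)) 6 = 5 by omega, show (n - 6 + 1) % 4 = 1 by omega, show min (n - (n - 6 - 1)) 6 = 6 by omega, show (n - 6 - 1) % 4 = 3 by omega]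
    decide
  · rw [modip (show n - 5 + 1 < n by omega), modim (show 1 ≤ n - 5 by omega) (show n - 5 < n by omega)]
    rw [show min (n - (n - 5)) 6 = 5 by omega, show (n - 5) % 4 = 1 by omega, show min (n - (n - 5 + 1)) 6 = 4 by omega, show (n - 5 + 1) % 4 = 2 by omega, show min (n - (n - 5 - 1)) 6 = 6 by omega, show (n - 5 - 1) % 4 = 0 by omega]
    decide
  · rw [modip (show n - 4 + 1 < n by omega), modim (show 1 ≤ n - 4 by omega) (show n - 4 < n by omega)]
    rw [show min (n - (n - 4)) 6 = 4 by omega, show (n - 4) % 4 = 2 by omega, show min (n - (n - 4 + 1)) 6 = 3 by omega, show (n - 4 + 1) % 4 = 3 by omega, show min (n - (n - 4 - 1)) 6 = 5 by omega, show (n - 4 - 1) % 4 = 1 by omega]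
    decide
  · rw [modip (show n - 3 + 1 < n by omega), modim (show 1 ≤ n - 3 by omega) (show n - 3 < n by omega)]
    rw [show min (n - (n - 3)) 6 = 3 by omega, show (n - 3) % 4 = 3 by omega, show min (n - (n - 3 + 1)) 6 = 2 by omega, show (n - 3 + 1) % 4 = 0 by omega, show min (n - (n - 3 - 1)) 6 = 4 by omega, show (n - 3 - 1) % 4 = 2 by omega]
    decide
  · rw [modip (show n - 2 + 1 < n by omega), modim (show 1 ≤ n - 2 by omega) (show n - 2 < n by omega)]
    rw [show min (n - (n - 2)) 6 = 2 by omega, show (n - 2) % 4 = 0 by omega, show min (n - (n - 2 + 1)) 6 = 1 by omega, show (n - 2 + 1) % 4 = 1 by omega, show min (n - (n - 2 - 1)) 6 = 3 by omega, show (n - 2 - 1) % 4 = 3 by omega]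
    decide
  · rw [modip0 (show n - 1 + 1 = n by omega), modim (show 1 ≤ n - 1 by omega) (show n - 1 < n by omega)]
    rw [show min (n - (n - 1)) 6 = 1 by omega, show (n - 1) % 4 = 1 by omega, show min (n - (0)) 6 = 6 by omega, show (0) % 4 = 0 by omega, show min (n - (n - 1 - 1)) 6 = 2 by omega, show (n - 1 - 1) % 4 = 0 by omega]
    decide


lemma F1_bounds (n j i : ℕ) : 1 ≤ F1 n j i ∧ F1 n j i ≤ 6 := by
  unfold F1 T1 B; split_ifs <;> omega

lemma F2_bounds (n j i : ℕ) : 1 ≤ F2 n j i ∧ F2 n j i ≤ 6 := by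
  unfold F2 T2 B; split_ifs <;> omega

lemma F3_bounds (n j i : ℕ) : 1 ≤ F3 n j i ∧ F3 n j i ≤ 6 := by
  unfold F3 T3 B; split_ifs <;> omega

lemma upper1 (n : ℕ) (hmod : n % 4 = 1) (hn : 5 ≤ n) :
    ∃ f, IsGracefulColoring (circularLadder n) 6 f := by
  haveI : NeZero n := ⟨by omega⟩
  have hn3 : 3 ≤ n := by omega
  refine ⟨fun p => F1 n p.1.val p.2.val,
    graceful_of_local hn3 _ (fun v => F1_bounds n v.1.val v.2.val) ?_⟩
  rintro ⟨j, i⟩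
  dsimp only
  rw [val_add_one hn3 i, val_sub_one hn3 i]
  have hkey := key1 n i.val hmod hn i.isLt
  fin_cases j
  · exact hkey.1
  · exact hkey.2

lemma upper2 (n : ℕ) (hmod : n % 4 = 2) (hn : 6 ≤ n) :
    ∃ f, IsGracefulColoring (circularLadder n) 6 f := by
  haveI : NeZero n := ⟨by omega⟩
  have hn3 : 3 ≤ n := by omega
  refine ⟨fun p => F2 n p.1.val p.2.val,
    graceful_of_local hn3 _ (fun v => F2_bounds n v.1.val v.2.val) ?_⟩
  rintro ⟨j, i⟩
  dsimp only
  rw [val_add_one hn3 i, val_sub_one hn3 i]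
  have hkey := key2 n i.val hmod hn i.isLt
  fin_cases j
  · exact hkey.1
  · exact hkey.2

lemma upper3 (n : ℕ) (hmod : n % 4 = 3) (hn : 7 ≤ n) :
    ∃ f, IsGracefulColoring (circularLadder n) 6 f := by
  haveI : NeZero n := ⟨by omega⟩
  have hn3 : 3 ≤ n := by omega
  refine ⟨fun p => F3 n p.1.val p.2.val,
    graceful_of_local hn3 _ (fun v => F3_bounds n v.1.val v.2.val) ?_⟩
  rintro ⟨j, i⟩
  dsimp only
  rw [val_add_one hn3 i, val_sub_one hn3 i]
  have hkey := key3 n i.val hmod hn i.isLt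
  fin_cases j
  · exact hkey.1
  · exact hkey.2

theorem gracefulChromaticNumber_circularLadder_of_not_four_dvd (n : ℕ) (hn : 4 ≤ n)
    (hmod : n % 4 ≠ 0) :
    gracefulChromaticNumber (circularLadder n) = 6 := by
  have hex : ∃ f, IsGracefulColoring (circularLadder n) 6 f := by
    rcases (by omega : n % 4 = 1 ∨ n % 4 = 2 ∨ n % 4 = 3) with h | h | h
    · exact upper1 n h (by omega)
    · exact upper2 n h (by omega)
    · exact upper3 n h (by omega)
  obtain ⟨f6, hf6⟩ := hex
  unfold gracefulChromaticNumber
  apply le_antisymm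
  · exact Nat.sInf_le ⟨f6, hf6⟩
  · refine le_csInf ⟨6, ⟨f6, hf6⟩⟩ ?_
    rintro k ⟨f, hf⟩
    by_contra hlt
    push_neg at hlt
    have hf5 : IsGracefulColoring (circularLadder n) 5 f :=
      ⟨fun v => ⟨(hf.1 v).1, le_trans (hf.1 v).2 (by omega)⟩, hf.2.1, hf.2.2⟩
    exact no_graceful_five hn hmod f hf5
end
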